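/- Let E be an elliptic curve over a finite field k, q a prime, φ the reduction of a Lattès map with x ∘ [q] = φ ∘ x, and Q ∈ E(k). If x([q^{n−1}]Q) is not φ-periodic in ℙ¹(k), then q^n divides the order of Q in the finite group E(k). -/

import Mathlib

open WeierstrassCurve

/-- The x-coordinate map E(k) → ℙ¹(k) (modelled as `Option k`, with the point at
infinity O ↦ none). -/
def xCoord {k : Type*} [Field k] {W : WeierstrassCurve.Affine k} :
    W.Point → Option k
  | .zero => none
  | .some x _ _ => some x

open Classical in
/-- Let E be an elliptic curve (a Weierstrass curve) over a finite
field k, q a prime, φ the reduction of a Lattès map, so that x ∘ [q] = φ ∘ x, and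
Q ∈ E(k). If x([q^{n−1}]Q) is not φ-periodic in ℙ¹(k), then q^n divides the order
of Q in the finite group E(k). -/
theorem stmt_12 {k : Type*} [Field k] [Finite k]
    (W : WeierstrassCurve.Affine k) [Finite W.Point] (q : ℕ) (hq : q.Prime)
    (φ : Option k → Option k)
    (hφ : ∀ P : W.Point, xCoord (q • P) = φ (xCoord P))
    (Q : W.Point) (n : ℕ) (hn : 1 ≤ n)
    (h : ¬ ∃ m : ℕ, 1 ≤ m ∧
        φ^[m] (xCoord (q ^ (n - 1) • Q)) = xCoord (q ^ (n - 1) • Q)) :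
    q ^ n ∣ addOrderOf Q := by
  by_contra hcon
  apply h
  set R : W.Point := q ^ (n - 1) • Q with hR
  -- iterating φ corresponds to multiplication by powers of q
  have hiter : ∀ m : ℕ, φ^[m] (xCoord R) = xCoord (q ^ m • R) := by
    intro m
    induction m with
    | zero => simp
    | succ m ih =>
      rw [Function.iterate_succ_apply', ih, ← hφ, ← mul_smul, ← pow_succ']
  have hQfin : IsOfFinAddOrder Q := isOfFinAddOrder_of_finite Q
  have hd : 0 < addOrderOf Q := hQfin.addOrderOf_pos
  set d := addOrderOf Q with hdd
  set e := addOrderOf R with hee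
  have heq : e = d / Nat.gcd d (q ^ (n - 1)) := addOrderOf_nsmul Q
  set g := Nat.gcd d (q ^ (n - 1)) with hg
  have hgd : g ∣ d := Nat.gcd_dvd_left _ _
  have hgq : g ∣ q ^ (n - 1) := Nat.gcd_dvd_right _ _
  have hmul : e * g = d := by
    rw [heq]; exact Nat.div_mul_cancel hgd
  -- q does not divide e
  have hqe : ¬ q ∣ e := by
    intro hdvd
    obtain ⟨j, hj, hjg⟩ := (Nat.dvd_prime_pow hq).mp hgq
    have hq1 : q ^ (j + 1) ∣ d := by
      rw [← hmul, hjg, pow_succ']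
      exact mul_dvd_mul hdvd dvd_rfl
    rcases lt_or_eq_of_le hj with hlt | heqj
    · have : q ^ (j + 1) ∣ q ^ (n - 1) := pow_dvd_pow q hlt
      have : q ^ (j + 1) ∣ g := Nat.dvd_gcd hq1 this
      rw [hjg] at this
      exact absurd (Nat.pow_dvd_pow_iff_le_right hq.one_lt |>.mp this)
        (by omega)
    · subst heqj
      apply hcon
      have hn1 : n - 1 + 1 = n := by omega
      rw [← hn1]
      exact hq1
  have hcop : Nat.Coprime q e := hq.coprime_iff_not_dvd.mpr hqe
  have he : 0 < e := by
    have : 0 < d := hd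
    rcases Nat.eq_zero_or_pos e with h0 | h0
    · rw [← hmul, h0, zero_mul] at this; omega
    · exact h0
  refine ⟨e.totient, Nat.totient_pos.mpr he, ?_⟩
  rw [hiter]
  have hmod : q ^ e.totient ≡ 1 [MOD e] := Nat.ModEq.pow_totient hcop
  have : q ^ e.totient • R = R := by
    rw [← mod_addOrderOf_nsmul R (q ^ e.totient), ← hee, hmod, mod_addOrderOf_nsmul,
      one_smul]
  rw [this]
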